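/- arXiv:2109.08332 — 9 statements merged into one kernel-verified Lean document; each statement's English description precedes it below -/
import Mathlib

section
/- Let $N_p \ge 1$ and let $r_1,\dots,r_{N_p}$ be real numbers. Define the matrix $M \in \mathbb{R}^{N_p \times N_p}$ by: for each $k = 1,\dots,N_p-1$, row $k$ of $M$ has the entry $r_1$ in column $1$, the entry $-r_{k+1}$ in column $k+1$, and zeros elsewhere; and row $N_p$ of $M$ has every entry equal to $1$. Then $\det M = \sum_{k=1}^{N_p} \prod_{i \neq k} r_i$ (the $(N_p-1)$-st elementary symmetric polynomial of $r_1,\dots,r_{N_p}$). In particular, if $r_i > 0$ for all $i$, then $M$ is invertible. -/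
/-!
Replace the current-law row by an arbitrary linear form `w`. The determinant then becomes
`∑ j, w j * ∏ i ≠ j, r i`, which goes by induction on the size: in the Laplace expansion along
the last column only the entries `-r last` (last voltage row) and `w last` survive, and both
complementary minors are again of this shape, with last row `r 0 • e 0`, respectively `w`
restricted.
-/
open Finset Matrix

namespace Fin

variable {M : Type*} [CommMonoid M] {n : ℕ}

theorem prod_univ_erase (f : Fin (n + 1) → M) (p : Fin (n + 1)) :
    ∏ i ∈ univ.erase p, f i = ∏ i : Fin n, f (p.succAbove i) := by
  rw [univ_succAbove n p, erase_cons, prod_map, coe_succAboveEmb]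

theorem prod_univ_erase_last (f : Fin (n + 1) → M) :
    ∏ i ∈ univ.erase (last n), f i = ∏ i : Fin n, f i.castSucc := by
  rw [prod_univ_erase, succAbove_last]

theorem prod_univ_erase_castSucc (f : Fin (n + 2) → M) (p : Fin (n + 1)) :
    ∏ i ∈ univ.erase p.castSucc, f i = (∏ i ∈ univ.erase p, f i.castSucc) * f (last (n + 1)) := by
  rw [prod_univ_erase, prod_univ_erase, prod_univ_castSucc,
    succAbove_of_le_castSucc _ _ (castSucc_le_castSucc_iff.2 (le_last p)), succ_last]
  simp only [castSucc_succAbove_castSucc]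

end Fin

section KirchhoffMatrix

variable {R : Type*} [CommRing R] {n : ℕ}

def kirchhoffMatrix (r w : Fin (n + 1) → R) : Matrix (Fin (n + 1)) (Fin (n + 1)) R :=
  of fun k j => if k = Fin.last n then w j
    else if j = 0 then r 0 else if (j : ℕ) = k + 1 then -r j else 0

theorem kirchhoffMatrix_last_last (r w : Fin (n + 1) → R) :
    kirchhoffMatrix r w (Fin.last n) (Fin.last n) = w (Fin.last n) := by
  simp [kirchhoffMatrix]

theorem kirchhoffMatrix_castSucc_last (r w : Fin (n + 2) → R) (i : Fin (n + 1)) :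
    kirchhoffMatrix r w i.castSucc (Fin.last (n + 1)) =
      if i = Fin.last n then -r (Fin.last (n + 1)) else 0 := by
  have h : n = (i : ℕ) ↔ i = Fin.last n := by rw [Fin.ext_iff, Fin.val_last, eq_comm]
  simp [kirchhoffMatrix, h]

theorem kirchhoffMatrix_submatrix_castSucc (r w : Fin (n + 2) → R) :
    (kirchhoffMatrix r w).submatrix Fin.castSucc Fin.castSucc =
      kirchhoffMatrix (r ∘ Fin.castSucc) (Pi.single 0 (r 0)) := by
  ext k j
  rcases eq_or_ne k (Fin.last n) with rfl | hk
  · simp [kirchhoffMatrix, Pi.single_apply, j.is_lt.ne]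
  · simp [kirchhoffMatrix, hk]

theorem kirchhoffMatrix_submatrix_succAbove_castSucc (r w : Fin (n + 2) → R) :
    (kirchhoffMatrix r w).submatrix (Fin.last n).castSucc.succAbove Fin.castSucc =
      kirchhoffMatrix (r ∘ Fin.castSucc) (w ∘ Fin.castSucc) := by
  ext k j
  rcases eq_or_ne k (Fin.last n) with rfl | hk
  · simp [kirchhoffMatrix]
  · have hk' : (Fin.last n).castSucc.succAbove k = k.castSucc := Fin.succAbove_of_castSucc_lt _ _
      (Fin.castSucc_lt_castSucc_iff.2 (Fin.lt_last_iff_ne_last.2 hk))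
    simp [kirchhoffMatrix, hk, hk']

theorem det_kirchhoffMatrix (r w : Fin (n + 1) → R) :
    (kirchhoffMatrix r w).det = ∑ j, w j * ∏ i ∈ univ.erase j, r i := by
  induction n with
  | zero => simp [kirchhoffMatrix]
  | succ n ih =>
    have hodd : (-1 : R) ^ (n + (n + 1)) = -1 := Odd.neg_one_pow ⟨n, by ring⟩
    have heven : (-1 : R) ^ (n + 1 + (n + 1)) = 1 := Even.neg_one_pow ⟨n + 1, rfl⟩
    have hminor : ∑ j : Fin (n + 1), Pi.single (M := fun _ => R) 0 (r 0) j *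
        ∏ i ∈ univ.erase j, r i.castSucc = ∏ i : Fin (n + 1), r i.castSucc := by
      simp only [Pi.single_apply, ite_mul, zero_mul, sum_ite_eq', mem_univ, if_true]
      exact mul_prod_erase univ (fun i : Fin (n + 1) => r i.castSucc) (mem_univ 0)
    rw [det_succ_column _ (Fin.last (n + 1)), Fin.sum_univ_castSucc]
    simp only [kirchhoffMatrix_castSucc_last, mul_ite, ite_mul, mul_zero, zero_mul, sum_ite_eq',
      mem_univ, if_true]
    rw [Fin.succAbove_last, kirchhoffMatrix_submatrix_castSucc,
      kirchhoffMatrix_submatrix_succAbove_castSucc, ih, ih, kirchhoffMatrix_last_last]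
    simp only [Fin.val_castSucc, Fin.val_last, hodd, heven, Function.comp_apply, hminor]
    rw [Fin.sum_univ_castSucc (f := fun j => w j * ∏ i ∈ univ.erase j, r i),
      Fin.prod_univ_erase_last, neg_one_mul, neg_neg, one_mul, mul_sum]
    congr 1
    exact sum_congr rfl fun j _ => by rw [Fin.prod_univ_erase_castSucc]; ring

end KirchhoffMatrix

/-- The algebraic-constraint block `A₂₂` of a parallel battery module: first
`Np - 1` rows encode Kirchhoff voltage equalities, last row Kirchhoff's current
law. Its determinant is the `(Np-1)`-st elementary symmetric polynomial of the
resistances, hence it is invertible for positive resistances. -/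
theorem stmt0 (Np : ℕ) (hNp : 1 ≤ Np) (r : Fin Np → ℝ)
    (M : Matrix (Fin Np) (Fin Np) ℝ)
    (hM : ∀ k j : Fin Np,
      M k j =
        if (k : ℕ) = Np - 1 then 1
        else if j = ⟨0, hNp⟩ then r ⟨0, hNp⟩
        else if (j : ℕ) = (k : ℕ) + 1 then -(r j) else 0) :
    (M.det = ∑ k : Fin Np, ∏ i ∈ Finset.univ.erase k, r i) ∧
      ((∀ i, 0 < r i) → IsUnit M) := by
  obtain ⟨n, rfl⟩ : ∃ n, Np = n + 1 := ⟨Np - 1, (Nat.sub_add_cancel hNp).symm⟩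
  have hM' : M = kirchhoffMatrix r 1 := by
    ext k j
    have hk : (k : ℕ) = n ↔ k = Fin.last n := by rw [Fin.ext_iff, Fin.val_last]
    simp only [hM, kirchhoffMatrix, of_apply, Pi.one_apply, Nat.add_sub_cancel, Fin.mk_zero, hk]
    congr
  have hdet : M.det = ∑ k, ∏ i ∈ univ.erase k, r i := by
    rw [hM', det_kirchhoffMatrix]
    simp only [Pi.one_apply, one_mul]
  refine ⟨hdet, fun hr => (isUnit_iff_isUnit_det M).2 (isUnit_iff_ne_zero.2 ?_)⟩
  rw [hdet]
  exact (sum_pos (fun k _ => prod_pos fun i _ => hr i) univ_nonempty).ne'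
end

section
/- For all real parameters $Q_{1,1}, Q_{2,1}, Q_{1,2}, Q_{2,2} \neq 0$, $r_{1,1}, r_{2,1}, r_{1,2}, r_{2,2} \in \mathbb{R}$, and $a_1, a_2, a_3, a_4 \in \mathbb{R}$, the $11 \times 8$ matrix obtained by stacking $E$ on top of $C$ has rank at most $7 < 8$. Consequently, condition (C1) of complete observability, namely $\mathrm{rank}([E^\top, C^\top]^\top) = 8$, fails for the linearized 2P2S battery pack model. -/
/-! The descriptor matrix `E` has rank `4`, one for each state of charge, while the output matrix
`C` has only three rows; since stacking rows adds at most their ranks, `[E; C]` has rank at most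
`4 + 3 = 7`, whatever the cell parameters. -/

open Matrix Module Submodule

theorem Matrix.rank_fromRows_le {K m₁ m₂ n : Type*} [Field K] [Fintype m₁] [Fintype m₂]
    [Fintype n] (A : Matrix m₁ n K) (B : Matrix m₂ n K) :
    (fromRows A B).rank ≤ A.rank + B.rank := by
  have hrows : Set.range (fromRows A B).row = Set.range A.row ∪ Set.range B.row :=
    Set.Sum.elim_range A.row B.row
  rw [rank_eq_finrank_span_row, rank_eq_finrank_span_row A, rank_eq_finrank_span_row B, hrows,
    span_union]
  exact finrank_add_le_finrank_add_finrank _ _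

theorem stmt4_general
    (E : Matrix (Fin 8) (Fin 8) ℝ)
    (hE : E = Matrix.diagonal ![1, 1, 1, 1, 0, 0, 0, 0])
    (C : Matrix (Fin 3) (Fin 8) ℝ) :
    (Matrix.fromRows E C).rank ≤ 7 ∧ ¬ (Matrix.fromRows E C).rank = 8 := by
  have hE_rank : E.rank = 4 := by
    rw [hE, rank_diagonal, Fintype.card_subtype]
    simp [Finset.filter, Fin.univ_succ]
  have hC_rank : C.rank ≤ 3 := C.rank_le_height
  have hstack := rank_fromRows_le E C
  omega

/-- For the linearized 2P2S battery pack model, the stacked `11 × 8` matrix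
`[Eᵀ, Cᵀ]ᵀ` has rank at most `7 < 8`; condition (C1) of complete observability
(`rank [Eᵀ, Cᵀ]ᵀ = 8`) fails. -/
theorem stmt4 (Q11 Q21 Q12 Q22 : ℝ)
    (hQ11 : Q11 ≠ 0) (hQ21 : Q21 ≠ 0) (hQ12 : Q12 ≠ 0) (hQ22 : Q22 ≠ 0)
    (r11 r21 r12 r22 a1 a2 a3 a4 : ℝ)
    (E : Matrix (Fin 8) (Fin 8) ℝ)
    (hE : E = Matrix.diagonal ![1, 1, 1, 1, 0, 0, 0, 0])
    (C : Matrix (Fin 3) (Fin 8) ℝ)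
    (hC : C = !![a1, 0, a3, 0, r11, 0, r12, 0;
                 a1, 0, 0, a4, r11, 0, 0, r22;
                 0, a2, a3, 0, 0, r21, r12, 0]) :
    (Matrix.fromRows E C).rank ≤ 7 ∧ ¬ (Matrix.fromRows E C).rank = 8 :=
  stmt4_general E hE C
end

section
/- For all real parameters $Q_{1,1}, Q_{2,1}, Q_{1,2}, Q_{2,2} \neq 0$, $r_{1,1}, r_{2,1}, r_{1,2}, r_{2,2} \in \mathbb{R}$, and $a_1, a_2, a_3, a_4 \in \mathbb{R}$, there exists a nonzero vector $v \in \mathbb{R}^8$ with $Tv = 0$ and $Cv = 0$. Consequently $\mathrm{rank}([-T^\top, C^\top]^\top) < 8$, i.e. condition (C2) of complete observability fails at $\lambda = 0$ for the linearized 2P2S battery pack model. -/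
set_option maxHeartbeats 1000000

private lemma vec8_5 {α} (x0 x1 x2 x3 x4 x5 x6 x7 : α) :
    (![x0,x1,x2,x3,x4,x5,x6,x7]) (5:Fin 8) = x5 := rfl
private lemma vec8_6 {α} (x0 x1 x2 x3 x4 x5 x6 x7 : α) :
    (![x0,x1,x2,x3,x4,x5,x6,x7]) (6:Fin 8) = x6 := rfl
private lemma vec8_7 {α} (x0 x1 x2 x3 x4 x5 x6 x7 : α) :
    (![x0,x1,x2,x3,x4,x5,x6,x7]) (7:Fin 8) = x7 := rfl

lemma rank_lt_of_ker {m : Type*} [Fintype m] (M : Matrix m (Fin 8) ℝ)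
    (v : Fin 8 → ℝ) (hv : v ≠ 0) (h : M.mulVec v = 0) : M.rank < 8 := by
  have hrn := M.mulVecLin.finrank_range_add_finrank_ker
  have hker : 0 < Module.finrank ℝ (LinearMap.ker M.mulVecLin) := by
    have : v ∈ LinearMap.ker M.mulVecLin := h
    refine Module.finrank_pos_iff_exists_ne_zero.mpr ?_
    exact ⟨⟨v, this⟩, fun hh => hv (by simpa using congrArg Subtype.val hh)⟩
  have hdim : Module.finrank ℝ (Fin 8 → ℝ) = 8 := by simp
  rw [hdim] at hrn
  have : M.rank = Module.finrank ℝ (LinearMap.range M.mulVecLin) := rfl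
  omega

/-- For the linearized 2P2S battery pack model there is a nonzero vector in the
common kernel of `T` and `C`; hence `rank [-Tᵀ, Cᵀ]ᵀ < 8`, i.e. condition (C2)
of complete observability fails at `λ = 0`. -/
theorem stmt5 (Q11 Q21 Q12 Q22 : ℝ)
    (hQ11 : Q11 ≠ 0) (hQ21 : Q21 ≠ 0) (hQ12 : Q12 ≠ 0) (hQ22 : Q22 ≠ 0)
    (r11 r21 r12 r22 a1 a2 a3 a4 : ℝ)
    (T : Matrix (Fin 8) (Fin 8) ℝ)
    (hT : T = !![0, 0, 0, 0, 1/Q11, 0, 0, 0;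
                 0, 0, 0, 0, 0, 1/Q21, 0, 0;
                 0, 0, 0, 0, 0, 0, 1/Q12, 0;
                 0, 0, 0, 0, 0, 0, 0, 1/Q22;
                 0, 0, 0, 0, 1, 1, 0, 0;
                 0, 0, 0, 0, 0, 0, 1, 1;
                 a1, -a2, 0, 0, r11, -r21, 0, 0;
                 0, 0, a3, -a4, 0, 0, r12, -r22])
    (C : Matrix (Fin 3) (Fin 8) ℝ)
    (hC : C = !![a1, 0, a3, 0, r11, 0, r12, 0;
                 a1, 0, 0, a4, r11, 0, 0, r22;
                 0, a2, a3, 0, 0, r21, r12, 0]) :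
    (∃ v : Fin 8 → ℝ, v ≠ 0 ∧ T.mulVec v = 0 ∧ C.mulVec v = 0) ∧
      (Matrix.fromRows (-T) C).rank < 8 := by
  subst hT hC
  have key : ∃ v : Fin 8 → ℝ, v ≠ 0 ∧
      (!![(0:ℝ), 0, 0, 0, 1/Q11, 0, 0, 0;
          0, 0, 0, 0, 0, 1/Q21, 0, 0;
          0, 0, 0, 0, 0, 0, 1/Q12, 0;
          0, 0, 0, 0, 0, 0, 0, 1/Q22;
          0, 0, 0, 0, 1, 1, 0, 0;
          0, 0, 0, 0, 0, 0, 1, 1;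
          a1, -a2, 0, 0, r11, -r21, 0, 0;
          0, 0, a3, -a4, 0, 0, r12, -r22]).mulVec v = 0 ∧
      (!![a1, (0:ℝ), a3, 0, r11, 0, r12, 0;
          a1, 0, 0, a4, r11, 0, 0, r22;
          0, a2, a3, 0, 0, r21, r12, 0]).mulVec v = 0 := by
    by_cases h1 : a1 = 0
    · refine ⟨![1,0,0,0,0,0,0,0], ?_, ?_, ?_⟩
      · intro h; simpa using congrFun h 0
      all_goals
        funext i; fin_cases i <;>
          simp [Matrix.mulVec, dotProduct, Fin.sum_univ_succ, h1]
    by_cases h2 : a2 = 0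
    · refine ⟨![0,1,0,0,0,0,0,0], ?_, ?_, ?_⟩
      · intro h; simpa using congrFun h 1
      all_goals
        funext i; fin_cases i <;>
          simp [Matrix.mulVec, dotProduct, Fin.sum_univ_succ, h2]
    by_cases h3 : a3 = 0
    · refine ⟨![0,0,1,0,0,0,0,0], ?_, ?_, ?_⟩
      · intro h; simpa using congrFun h 2
      all_goals
        funext i; fin_cases i <;>
          simp [Matrix.mulVec, dotProduct, Fin.sum_univ_succ, h3]
    by_cases h4 : a4 = 0
    · refine ⟨![0,0,0,1,0,0,0,0], ?_, ?_, ?_⟩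
      · intro h; simpa using congrFun h 3
      all_goals
        funext i; fin_cases i <;>
          simp [Matrix.mulVec, dotProduct, Fin.sum_univ_succ, h4]
    · refine ⟨![a2*a3*a4, a1*a3*a4, -(a1*a2*a4), -(a1*a2*a3), 0,0,0,0], ?_, ?_, ?_⟩
      · intro h
        have := congrFun h 0
        simp [mul_eq_zero] at this
        tauto
      all_goals
        funext i; fin_cases i <;>
          (simp [-mul_eq_zero, Matrix.cons_mulVec, Matrix.cons_dotProduct, Matrix.empty_mulVec, vec8_5, vec8_6, vec8_7] <;> ring)
  obtain ⟨v, hv, hTv, hCv⟩ := key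
  refine ⟨⟨v, hv, hTv, hCv⟩, ?_⟩
  apply rank_lt_of_ker _ v hv
  rw [Matrix.fromRows_mulVec, Matrix.neg_mulVec, hTv, hCv]
  simp
end

section
/- Let $N \ge 1$, $\tilde{G} \in \mathbb{R}^{N \times N}$, $\gamma \ge 0$, $\varepsilon > 0$, and let $P \in \mathbb{R}^{N \times N}$ be symmetric positive definite satisfying the algebraic Riccati equation $\tilde{G}^\top P + P \tilde{G} + \gamma^2 P P + (1 + \varepsilon)\mathbf{I}_N = 0$. Then for all $e, d \in \mathbb{R}^N$ with $\|d\| \le \gamma \|e\|$ (Euclidean norm), $\langle e, P(\tilde{G} e + d) \rangle \le -\tfrac{\varepsilon}{2} \|e\|^2$. -/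
/-!
Testing the Riccati equation against `e` gives
`2⟪e, P G̃ e⟫ = -γ²‖P e‖² - (1 + ε)‖e‖²`. By Cauchy–Schwarz and symmetry of `P`,
`⟪e, P d⟫ ≤ γ‖P e‖‖e‖`, and completing the square `(γ‖P e‖ - ‖e‖)² ≥ 0` leaves `-(ε/2)‖e‖²`.
-/

open Matrix

open scoped RealInnerProductSpace

theorem LinearMap.IsSymmetric.inner_map_add_le_of_riccati {E : Type*}
    [NormedAddCommGroup E] [InnerProductSpace ℝ E] {P : E →ₗ[ℝ] E} (hP : P.IsSymmetric)
    {γ ε : ℝ} {e v d : E}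
    (hv : 2 * ⟪e, P v⟫ + γ ^ 2 * ‖P e‖ ^ 2 + (1 + ε) * ‖e‖ ^ 2 = 0)
    (hd : ‖d‖ ≤ γ * ‖e‖) :
    ⟪e, P (v + d)⟫ ≤ -(ε / 2) * ‖e‖ ^ 2 := by
  have hPd : ⟪e, P d⟫ ≤ γ * ‖P e‖ * ‖e‖ :=
    calc ⟪e, P d⟫ = ⟪P e, d⟫ := (hP e d).symm
      _ ≤ ‖P e‖ * ‖d‖ := real_inner_le_norm _ _
      _ ≤ ‖P e‖ * (γ * ‖e‖) := by gcongr
      _ = γ * ‖P e‖ * ‖e‖ := by ring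
  rw [map_add, inner_add_right]
  nlinarith [sq_nonneg (γ * ‖P e‖ - ‖e‖)]

theorem Matrix.inner_toEuclideanLin_riccati {n : Type*} [Fintype n] [DecidableEq n]
    {P : Matrix n n ℝ} (hP : P.IsHermitian) (G : Matrix n n ℝ) (a c : ℝ)
    (x : EuclideanSpace ℝ n) :
    ⟪x, toEuclideanLin (Gᵀ * P + P * G + a • (P * P) + c • 1) x⟫ =
      2 * ⟪x, toEuclideanLin P (toEuclideanLin G x)⟫ + a * ‖toEuclideanLin P x‖ ^ 2
        + c * ‖x‖ ^ 2 := by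
  have hPs : (toEuclideanLin P).IsSymmetric := isSymmetric_toEuclideanLin_iff.mpr hP
  have hGt : toEuclideanLin Gᵀ = (toEuclideanLin G).adjoint := by
    simpa using G.toEuclideanLin_conjTranspose_eq_adjoint
  simp only [map_add, map_smul, toLpLin_mul_same, toLpLin_one, LinearMap.add_apply,
    LinearMap.smul_apply, LinearMap.comp_apply, LinearMap.id_apply, inner_add_right,
    inner_smul_right, hGt, LinearMap.adjoint_inner_right, real_inner_self_eq_norm_sq]
  rw [real_inner_comm, hPs, ← hPs x (toEuclideanLin P x), real_inner_self_eq_norm_sq]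
  ring

theorem stmt8_general (N : ℕ) (Gt : Matrix (Fin N) (Fin N) ℝ)
    (γ : ℝ) (ε : ℝ)
    (P : Matrix (Fin N) (Fin N) ℝ) (hP : P.PosDef)
    (hric : Gtᵀ * P + P * Gt + γ ^ 2 • (P * P)
        + (1 + ε) • (1 : Matrix (Fin N) (Fin N) ℝ) = 0) :
    ∀ e d : EuclideanSpace ℝ (Fin N), ‖d‖ ≤ γ * ‖e‖ →
      (inner ℝ e (Matrix.toEuclideanLin P (Matrix.toEuclideanLin Gt e + d)) : ℝ)
        ≤ -(ε / 2) * ‖e‖ ^ 2 := by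
  intro e d hd
  have hv := inner_toEuclideanLin_riccati hP.isHermitian Gt (γ ^ 2) (1 + ε) e
  rw [hric, map_zero, LinearMap.zero_apply, inner_zero_right] at hv
  exact (isSymmetric_toEuclideanLin_iff.mpr hP.isHermitian).inner_map_add_le_of_riccati
    hv.symm hd

/-- If the symmetric positive definite `P` solves the Riccati equation
`G̃ᵀP + PG̃ + γ²PP + (1+ε)I = 0`, then along any direction `d` with
`‖d‖ ≤ γ‖e‖` the Lyapunov derivative satisfies
`⟨e, P(G̃e + d)⟩ ≤ -(ε/2)‖e‖²`. -/
theorem stmt8 (N : ℕ) (hN : 1 ≤ N) (Gt : Matrix (Fin N) (Fin N) ℝ)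
    (γ : ℝ) (hγ : 0 ≤ γ) (ε : ℝ) (hε : 0 < ε)
    (P : Matrix (Fin N) (Fin N) ℝ) (hP : P.PosDef)
    (hric : Gtᵀ * P + P * Gt + γ ^ 2 • (P * P)
        + (1 + ε) • (1 : Matrix (Fin N) (Fin N) ℝ) = 0) :
    ∀ e d : EuclideanSpace ℝ (Fin N), ‖d‖ ≤ γ * ‖e‖ →
      (inner ℝ e (Matrix.toEuclideanLin P (Matrix.toEuclideanLin Gt e + d)) : ℝ)
        ≤ -(ε / 2) * ‖e‖ ^ 2 :=
  stmt8_general N Gt γ ε P hP hric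
end

section
/- Let $N \ge 1$, $\tilde{G} \in \mathbb{R}^{N \times N}$, $\gamma \ge 0$, $\varepsilon > 0$, and let $P \in \mathbb{R}^{N \times N}$ be symmetric positive definite satisfying the algebraic Riccati equation $\tilde{G}^\top P + P \tilde{G} + \gamma^2 P P + (1 + \varepsilon)\mathbf{I}_N = 0$. Let $e : [0, \infty) \to \mathbb{R}^N$ be differentiable and $d : [0,\infty) \to \mathbb{R}^N$ be such that $\dot{e}(t) = \tilde{G} e(t) + d(t)$ and $\|d(t)\| \le \gamma \|e(t)\|$ for all $t \ge 0$. Then $e(t) \to 0$ as $t \to \infty$. -/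
/-!
The quadratic form `V(x) = ⟪x, P x⟫` is a Lyapunov function. Along a trajectory,
`V' = 2⟪G̃e + d, Pe⟫`, and the Riccati equation rewrites `2⟪G̃e, Pe⟫` as
`-γ²‖Pe‖² - (1 + ε)‖e‖²`; since `2⟪d, Pe⟫ ≤ 2γ‖e‖‖Pe‖ ≤ ‖e‖² + γ²‖Pe‖²`, this leaves
`V' ≤ -ε‖e‖² ≤ -c V` for some `c > 0`, so `V` decays exponentially (Grönwall). Conversely
the Riccati equation bounds `‖e‖` by a multiple of `‖Pe‖`, and Cauchy–Schwarz for the positive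
form `⟪·, P ·⟫` gives `‖Pe‖² ≤ ‖P‖ V`, so `‖e‖² ≤ K V → 0`.
-/

open Matrix Filter Topology Real
open scoped RealInnerProductSpace

namespace ContinuousLinearMap

variable {E : Type*} [NormedAddCommGroup E] [InnerProductSpace ℝ E] {A P : E →L[ℝ] E}

theorem inner_apply_self_le (x : E) : ⟪x, P x⟫ ≤ ‖P‖ * ‖x‖ ^ 2 :=
  calc ⟪x, P x⟫ ≤ ‖x‖ * ‖P x‖ := real_inner_le_norm _ _
    _ ≤ ‖x‖ * (‖P‖ * ‖x‖) := by gcongr; exact P.le_opNorm _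
    _ = ‖P‖ * ‖x‖ ^ 2 := by ring

theorem IsPositive.inner_apply_sq_le (hP : P.IsPositive) (x y : E) :
    ⟪x, P y⟫ ^ 2 ≤ ⟪x, P x⟫ * ⟪y, P y⟫ := by
  have hsymm : ⟪y, P x⟫ = ⟪x, P y⟫ := by
    rw [← hP.inner_left_eq_inner_right, real_inner_comm]
  have hdisc := discrim_le_zero (a := ⟪x, P x⟫) (b := 2 * ⟪x, P y⟫) (c := ⟪y, P y⟫) fun t ↦ by
    have h := hP.inner_nonneg_right (t • x + y)
    simp only [map_add, map_smul, inner_add_left, inner_add_right, real_inner_smul_left,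
      real_inner_smul_right, hsymm] at h
    linarith
  rw [discrim] at hdisc
  linarith

theorem IsPositive.norm_apply_sq_le (hP : P.IsPositive) (x : E) :
    ‖P x‖ ^ 2 ≤ ‖P‖ * ⟪x, P x⟫ := by
  rcases (norm_nonneg (P x)).eq_or_lt with h | h
  · rw [← h, sq, zero_mul]
    exact mul_nonneg (norm_nonneg P) (hP.inner_nonneg_right x)
  -- Cauchy–Schwarz for `⟪·, P ·⟫` applied to `x` and `P x`
  have hcs := hP.inner_apply_sq_le x (P x)
  rw [← hP.inner_left_eq_inner_right, real_inner_self_eq_norm_sq] at hcs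
  have hle := hcs.trans <|
    mul_le_mul_of_nonneg_left (inner_apply_self_le (P x)) (hP.inner_nonneg_right x)
  refine le_of_mul_le_mul_right ?_ (pow_pos h 2)
  linarith

theorem hasDerivAt_inner_apply_self (hP : (P : E →ₗ[ℝ] E).IsSymmetric) {f : ℝ → E} {f' : E}
    {t : ℝ} (hf : HasDerivAt f f' t) :
    HasDerivAt (fun s ↦ ⟪f s, P (f s)⟫) (2 * ⟪f', P (f t)⟫) t := by
  refine (hf.inner ℝ (P.hasFDerivAt.comp_hasDerivAt t hf)).congr_deriv ?_
  rw [Function.comp_apply, ← coe_coe, ← hP, real_inner_comm]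
  ring

section Riccati

variable [CompleteSpace E] {γ ε : ℝ}

theorem inner_apply_self_eq_zero_of_riccati (hP : (P : E →ₗ[ℝ] E).IsSymmetric)
    (hric : adjoint A * P + P * A + γ ^ 2 • (P * P) + (1 + ε) • (1 : E →L[ℝ] E) = 0) (x : E) :
    2 * ⟪A x, P x⟫ + γ ^ 2 * ‖P x‖ ^ 2 + (1 + ε) * ‖x‖ ^ 2 = 0 := by
  have h := congrArg (fun T : E →L[ℝ] E ↦ ⟪x, T x⟫) hric
  simp only [_root_.add_apply, mul_apply_eq_comp, _root_.smul_apply, one_apply_eq_self,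
    _root_.zero_apply, inner_add_right, real_inner_smul_right, inner_zero_right,
    adjoint_inner_right, real_inner_self_eq_norm_sq] at h
  have hsymm : ∀ y z, ⟪P y, z⟫ = ⟪y, P z⟫ := hP
  rw [← hsymm x (A x), ← hsymm x (P x), real_inner_comm (A x), real_inner_self_eq_norm_sq] at h
  linarith

theorem inner_add_apply_le_of_riccati (hP : (P : E →ₗ[ℝ] E).IsSymmetric)
    (hric : adjoint A * P + P * A + γ ^ 2 • (P * P) + (1 + ε) • (1 : E →L[ℝ] E) = 0)
    {x d : E} (hd : ‖d‖ ≤ γ * ‖x‖) :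
    2 * ⟪A x + d, P x⟫ ≤ -ε * ‖x‖ ^ 2 := by
  have hric_x := inner_apply_self_eq_zero_of_riccati hP hric x
  have hdP : ⟪d, P x⟫ ≤ γ * ‖x‖ * ‖P x‖ :=
    (real_inner_le_norm _ _).trans (mul_le_mul_of_nonneg_right hd (norm_nonneg _))
  rw [inner_add_left]
  -- `2γ‖x‖‖P x‖ ≤ ‖x‖² + γ²‖P x‖²` absorbs the perturbation into the Riccati terms
  nlinarith [sq_nonneg (‖x‖ - γ * ‖P x‖)]

theorem mul_norm_le_of_riccati (hP : (P : E →ₗ[ℝ] E).IsSymmetric)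
    (hric : adjoint A * P + P * A + γ ^ 2 • (P * P) + (1 + ε) • (1 : E →L[ℝ] E) = 0) (x : E) :
    (1 + ε) * ‖x‖ ≤ 2 * ‖A‖ * ‖P x‖ := by
  have hric_x := inner_apply_self_eq_zero_of_riccati hP hric x
  have hAP : -⟪A x, P x⟫ ≤ ‖A‖ * ‖x‖ * ‖P x‖ :=
    (neg_le_abs _).trans ((abs_real_inner_le_norm _ _).trans
      (mul_le_mul_of_nonneg_right (A.le_opNorm x) (norm_nonneg _)))
  rcases (norm_nonneg x).eq_or_lt with hx | hx
  · rw [← hx, mul_zero]; positivity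
  refine le_of_mul_le_mul_right ?_ hx
  nlinarith [sq_nonneg (γ * ‖P x‖)]

theorem norm_sq_le_of_riccati (hP : P.IsPositive) (hε : -1 < ε)
    (hric : adjoint A * P + P * A + γ ^ 2 • (P * P) + (1 + ε) • (1 : E →L[ℝ] E) = 0) (x : E) :
    ‖x‖ ^ 2 ≤ 4 * ‖A‖ ^ 2 * ‖P‖ / (1 + ε) ^ 2 * ⟪x, P x⟫ := by
  have hε' : 0 < 1 + ε := by linarith
  have hx := mul_norm_le_of_riccati hP.isSymmetric hric x
  rw [div_mul_eq_mul_div, le_div_iff₀ (by positivity)]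
  calc ‖x‖ ^ 2 * (1 + ε) ^ 2 = ((1 + ε) * ‖x‖) ^ 2 := by ring
    _ ≤ (2 * ‖A‖ * ‖P x‖) ^ 2 := by gcongr
    _ = 4 * ‖A‖ ^ 2 * ‖P x‖ ^ 2 := by ring
    _ ≤ 4 * ‖A‖ ^ 2 * (‖P‖ * ⟪x, P x⟫) := by gcongr; exact hP.norm_apply_sq_le x
    _ = 4 * ‖A‖ ^ 2 * ‖P‖ * ⟪x, P x⟫ := by ring

end Riccati

end ContinuousLinearMap

theorem le_mul_exp_of_hasDerivAt_le_neg_mul {V v : ℝ → ℝ} {c : ℝ}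
    (hV : ∀ t, 0 ≤ t → HasDerivAt V (v t) t) (hv : ∀ t, 0 ≤ t → v t ≤ -c * V t)
    {t : ℝ} (ht : 0 ≤ t) : V t ≤ V 0 * exp (-c * t) := by
  have h := le_gronwallBound_of_liminf_deriv_right_le (f := V) (f' := v) (δ := V 0) (K := -c)
    (ε := 0) (a := 0) (b := t)
    (fun s hs ↦ (hV s hs.1).continuousAt.continuousWithinAt)
    (fun s hs _ hr ↦ (hV s hs.1).hasDerivWithinAt.liminf_right_slope_le hr) le_rfl
    (fun s hs ↦ by rw [add_zero]; exact hv s hs.1) t ⟨ht, le_rfl⟩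
  rwa [sub_zero, gronwallBound_ε0] at h

open ContinuousLinearMap in
theorem tendsto_zero_of_riccati {E : Type*} [NormedAddCommGroup E] [InnerProductSpace ℝ E]
    [CompleteSpace E] {A P : E →L[ℝ] E} {γ ε : ℝ} (hP : P.IsPositive) (hε : 0 < ε)
    (hric : adjoint A * P + P * A + γ ^ 2 • (P * P) + (1 + ε) • (1 : E →L[ℝ] E) = 0)
    {e d : ℝ → E} (hde : ∀ t, 0 ≤ t → HasDerivAt e (A (e t) + d t) t)
    (hd : ∀ t, 0 ≤ t → ‖d t‖ ≤ γ * ‖e t‖) :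
    Tendsto e atTop (𝓝 0) := by
  set V : ℝ → ℝ := fun t ↦ ⟪e t, P (e t)⟫
  -- `V ≤ ‖P‖ ‖e‖²` turns `V' ≤ -ε ‖e‖²` into `V' ≤ -c V`; the `+ 1` covers `P = 0`
  set c := ε / (‖P‖ + 1)
  have hc : 0 < c := by positivity
  have hcP : c * ‖P‖ ≤ ε := by
    rw [div_mul_eq_mul_div, div_le_iff₀ (by positivity)]
    exact mul_le_mul_of_nonneg_left (by linarith) hε.le
  have hV_deriv_le : ∀ t, 0 ≤ t → 2 * ⟪A (e t) + d t, P (e t)⟫ ≤ -c * V t := fun t ht ↦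
    calc 2 * ⟪A (e t) + d t, P (e t)⟫ ≤ -ε * ‖e t‖ ^ 2 :=
          inner_add_apply_le_of_riccati hP.isSymmetric hric (hd t ht)
      _ ≤ -(c * ‖P‖) * ‖e t‖ ^ 2 := by gcongr
      _ ≤ -c * V t := by
          rw [neg_mul, neg_mul, mul_assoc, neg_le_neg_iff]
          exact mul_le_mul_of_nonneg_left (inner_apply_self_le _) hc.le
  have hV_decay : ∀ t, 0 ≤ t → V t ≤ V 0 * exp (-c * t) := fun _ ↦
    le_mul_exp_of_hasDerivAt_le_neg_mul
      (fun s hs ↦ hasDerivAt_inner_apply_self hP.isSymmetric (hde s hs)) hV_deriv_le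
  set K := 4 * ‖A‖ ^ 2 * ‖P‖ / (1 + ε) ^ 2
  have hbound : ∀ᶠ t in atTop, ‖e t‖ ≤ √(K * (V 0 * exp (-c * t))) := by
    filter_upwards [eventually_ge_atTop 0] with t ht
    rw [← abs_norm]
    refine abs_le_sqrt ((norm_sq_le_of_riccati hP (by linarith) hric (e t)).trans ?_)
    gcongr
    exact hV_decay t ht
  have hexp : Tendsto (fun t ↦ exp (-c * t)) atTop (𝓝 0) :=
    tendsto_exp_atBot.comp (tendsto_id.const_mul_atTop_of_neg (neg_neg_of_pos hc))
  have hlim : Tendsto (fun t ↦ √(K * (V 0 * exp (-c * t)))) atTop (𝓝 0) := by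
    simpa using ((hexp.const_mul (V 0)).const_mul K).sqrt
  exact squeeze_zero_norm' hbound hlim

theorem stmt9_general (N : ℕ) (Gt : Matrix (Fin N) (Fin N) ℝ)
    (γ : ℝ) (ε : ℝ) (hε : 0 < ε)
    (P : Matrix (Fin N) (Fin N) ℝ) (hP : P.PosDef)
    (hric : Gtᵀ * P + P * Gt + γ ^ 2 • (P * P)
        + (1 + ε) • (1 : Matrix (Fin N) (Fin N) ℝ) = 0)
    (e d : ℝ → EuclideanSpace ℝ (Fin N))
    (hde : ∀ t : ℝ, 0 ≤ t →
      HasDerivAt e (Matrix.toEuclideanLin Gt (e t) + d t) t)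
    (hd : ∀ t : ℝ, 0 ≤ t → ‖d t‖ ≤ γ * ‖e t‖) :
    Filter.Tendsto e Filter.atTop (nhds 0) := by
  have hP' : (toEuclideanCLM (𝕜 := ℝ) P).IsPositive :=
    (ContinuousLinearMap.isPositive_toLinearMap_iff _).mp
      (isPositive_toEuclideanLin_iff.mpr hP.posSemidef)
  have hric' := congrArg (toEuclideanCLM (n := Fin N) (𝕜 := ℝ)) hric
  rw [← conjTranspose_eq_transpose_of_trivial, ← star_eq_conjTranspose] at hric'
  simp only [map_add, map_mul, map_smul, map_one, map_zero, map_star,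
    ContinuousLinearMap.star_eq_adjoint] at hric'
  exact tendsto_zero_of_riccati hP' hε hric' hde hd

/-- Differential-state convergence of the observer: if the symmetric positive
definite `P` solves `G̃ᵀP + PG̃ + γ²PP + (1+ε)I = 0` and the error `e` obeys
`ė = G̃e + d` on `[0, ∞)` with `‖d‖ ≤ γ‖e‖`, then `e(t) → 0` as `t → ∞`. -/
theorem stmt9 (N : ℕ) (hN : 1 ≤ N) (Gt : Matrix (Fin N) (Fin N) ℝ)
    (γ : ℝ) (hγ : 0 ≤ γ) (ε : ℝ) (hε : 0 < ε)
    (P : Matrix (Fin N) (Fin N) ℝ) (hP : P.PosDef)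
    (hric : Gtᵀ * P + P * Gt + γ ^ 2 • (P * P)
        + (1 + ε) • (1 : Matrix (Fin N) (Fin N) ℝ) = 0)
    (e d : ℝ → EuclideanSpace ℝ (Fin N))
    (hde : ∀ t : ℝ, 0 ≤ t →
      HasDerivAt e (Matrix.toEuclideanLin Gt (e t) + d t) t)
    (hd : ∀ t : ℝ, 0 ≤ t → ‖d t‖ ≤ γ * ‖e t‖) :
    Filter.Tendsto e Filter.atTop (nhds 0) :=
  stmt9_general N Gt γ ε hε P hP hric e d hde hd
end

section
/- Let $N \ge 1$, $\tilde{G} \in \mathbb{R}^{N \times N}$, $\gamma \ge 0$, $\varepsilon > 0$, and let $P \in \mathbb{R}^{N \times N}$ be symmetric positive definite satisfying the algebraic Riccati equation $\tilde{G}^\top P + P \tilde{G} + \gamma^2 P P + (1 + \varepsilon)\mathbf{I}_N = 0$. Let $\mu > 0$ be such that $\langle x, Px \rangle \le \mu \|x\|^2$ for all $x \in \mathbb{R}^N$. Let $e : [0, \infty) \to \mathbb{R}^N$ be differentiable and $d : [0,\infty) \to \mathbb{R}^N$ be such that $\dot{e}(t) = \tilde{G} e(t) + d(t)$ and $\|d(t)\|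 \le \gamma \|e(t)\|$ for all $t \ge 0$. Then for all $t \ge 0$, $\langle e(t), P e(t) \rangle \le \langle e(0), P e(0) \rangle \, e^{-(\varepsilon/\mu) t}$. -/
/-!
Along a trajectory, `W = ⟨e, P e⟩` has derivative `2⟨G̃ e + d, P e⟩`. Testing the Riccati equation
against `e` gives `2⟨G̃ e, P e⟩ = -γ²‖P e‖² - (1 + ε)‖e‖²`, and the disturbance term is absorbed
by `2⟨d, P e⟩ ≤ 2γ‖e‖‖P e‖ ≤ ‖e‖² + γ²‖P e‖²`. Hence `W' ≤ -ε‖e‖² ≤ -(ε/μ) W`, and Grönwall's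
inequality gives the exponential decay.
-/

open Matrix

theorem Matrix.inner_toEuclideanLin_transpose {ι : Type*} [Fintype ι] [DecidableEq ι]
    (A : Matrix ι ι ℝ) (x y : EuclideanSpace ℝ ι) :
    inner ℝ x (toEuclideanLin Aᵀ y) = inner ℝ (toEuclideanLin A x) y := by
  rw [← conjTranspose_eq_transpose_of_trivial, toEuclideanLin_conjTranspose_eq_adjoint,
    LinearMap.adjoint_inner_right]

theorem Matrix.IsHermitian.inner_riccati_eq_zero {ι : Type*} [Fintype ι] [DecidableEq ι]
    {G P : Matrix ι ι ℝ} (hP : P.IsHermitian) {γ ε : ℝ}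
    (hric : Gᵀ * P + P * G + γ ^ 2 • (P * P) + (1 + ε) • (1 : Matrix ι ι ℝ) = 0)
    (x : EuclideanSpace ℝ ι) :
    2 * inner ℝ (toEuclideanLin G x) (toEuclideanLin P x)
      + γ ^ 2 * ‖toEuclideanLin P x‖ ^ 2 + (1 + ε) * ‖x‖ ^ 2 = 0 := by
  have hsymm := isSymmetric_toEuclideanLin_iff.mpr hP
  have h := congrArg (fun M => inner ℝ x (toEuclideanLin M x)) hric
  simp only [map_add, map_smul, toLpLin_mul_same, LinearMap.add_apply, LinearMap.smul_apply,
    LinearMap.comp_apply, toLpLin_one, LinearMap.id_apply, inner_add_right, inner_smul_right,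
    inner_toEuclideanLin_transpose, map_zero, LinearMap.zero_apply, inner_zero_right] at h
  rw [← hsymm x, ← hsymm x, real_inner_self_eq_norm_sq,
    real_inner_self_eq_norm_sq, real_inner_comm (toEuclideanLin G x)] at h
  linarith

theorem LinearMap.IsSymmetric.hasDerivAt_inner_map_self {E : Type*} [NormedAddCommGroup E]
    [InnerProductSpace ℝ E] [FiniteDimensional ℝ E] {L : E →ₗ[ℝ] E} (hL : L.IsSymmetric)
    {e : ℝ → E} {e' : E} {t : ℝ} (he : HasDerivAt e e' t) :
    HasDerivAt (fun s => inner ℝ (e s) (L (e s))) (2 * inner ℝ e' (L (e t))) t := by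
  have hLe : HasDerivAt (fun s => L (e s)) (L e') t :=
    (LinearMap.toContinuousLinearMap L).hasFDerivAt.comp_hasDerivAt t he
  refine (he.inner ℝ hLe).congr_deriv ?_
  rw [← hL, real_inner_comm]
  ring

theorem two_inner_add_le_neg_mul_norm_sq {E : Type*} [NormedAddCommGroup E]
    [InnerProductSpace ℝ E] {x v w d : E} {γ ε : ℝ}
    (hric : 2 * inner ℝ v w + γ ^ 2 * ‖w‖ ^ 2 + (1 + ε) * ‖x‖ ^ 2 = 0)
    (hd : ‖d‖ ≤ γ * ‖x‖) :
    2 * inner ℝ (v + d) w ≤ -ε * ‖x‖ ^ 2 := by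
  have hdw : inner ℝ d w ≤ γ * ‖x‖ * ‖w‖ :=
    (real_inner_le_norm d w).trans (mul_le_mul_of_nonneg_right hd (norm_nonneg w))
  rw [inner_add_left]
  nlinarith [sq_nonneg (‖x‖ - γ * ‖w‖)]

theorem le_mul_exp_of_hasDerivAt_le_neg_mul_s10 {W W' : ℝ → ℝ} {c : ℝ}
    (hW : ∀ t, 0 ≤ t → HasDerivAt W (W' t) t) (hW' : ∀ t, 0 ≤ t → W' t ≤ -c * W t)
    {t : ℝ} (ht : 0 ≤ t) : W t ≤ W 0 * Real.exp (-c * t) := by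
  have h := le_gronwallBound_of_liminf_deriv_right_le (f := W) (K := -c) (ε := 0) (b := t)
    (fun s hs => (hW s hs.1).continuousAt.continuousWithinAt)
    (fun s hs _ hr => (hW s hs.1).hasDerivWithinAt.liminf_right_slope_le hr) le_rfl
    (fun s hs => (hW' s hs.1).trans_eq (add_zero _).symm) t ⟨ht, le_rfl⟩
  rwa [gronwallBound_ε0, sub_zero] at h

theorem stmt10_general (N : ℕ) (Gt : Matrix (Fin N) (Fin N) ℝ)
    (γ : ℝ) (ε : ℝ) (hε : 0 < ε)
    (P : Matrix (Fin N) (Fin N) ℝ) (hP : P.PosDef)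
    (hric : Gtᵀ * P + P * Gt + γ ^ 2 • (P * P)
        + (1 + ε) • (1 : Matrix (Fin N) (Fin N) ℝ) = 0)
    (μ : ℝ) (hμ : 0 < μ)
    (hPμ : ∀ x : EuclideanSpace ℝ (Fin N),
      (inner ℝ x (Matrix.toEuclideanLin P x) : ℝ) ≤ μ * ‖x‖ ^ 2)
    (e d : ℝ → EuclideanSpace ℝ (Fin N))
    (hde : ∀ t : ℝ, 0 ≤ t →
      HasDerivAt e (Matrix.toEuclideanLin Gt (e t) + d t) t)
    (hd : ∀ t : ℝ, 0 ≤ t → ‖d t‖ ≤ γ * ‖e t‖) :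
    ∀ t : ℝ, 0 ≤ t →
      (inner ℝ (e t) (Matrix.toEuclideanLin P (e t)) : ℝ)
        ≤ (inner ℝ (e 0) (Matrix.toEuclideanLin P (e 0)) : ℝ)
            * Real.exp (-(ε / μ) * t) := by
  have hsymm := isSymmetric_toEuclideanLin_iff.mpr hP.isHermitian
  refine fun t ht => le_mul_exp_of_hasDerivAt_le_neg_mul_s10
    (fun s hs => hsymm.hasDerivAt_inner_map_self (hde s hs)) (fun s hs => ?_) ht
  have hεW := mul_le_mul_of_nonneg_left (hPμ (e s)) (div_pos hε hμ).le
  rw [← mul_assoc, div_mul_cancel₀ ε hμ.ne'] at hεW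
  calc 2 * inner ℝ (toEuclideanLin Gt (e s) + d s) (toEuclideanLin P (e s))
      ≤ -ε * ‖e s‖ ^ 2 := two_inner_add_le_neg_mul_norm_sq
        (hP.isHermitian.inner_riccati_eq_zero hric _) (hd s hs)
    _ ≤ -(ε / μ) * inner ℝ (e s) (toEuclideanLin P (e s)) := by linarith

/-- Quantitative (exponential) convergence of the observer error: under the
Riccati equation and the Lipschitz bound, the Lyapunov quantity
`⟨e(t), P e(t)⟩` decays at rate `ε/μ`, where `μ` bounds `P` from above. -/
theorem stmt10 (N : ℕ) (hN : 1 ≤ N) (Gt : Matrix (Fin N) (Fin N) ℝ)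
    (γ : ℝ) (hγ : 0 ≤ γ) (ε : ℝ) (hε : 0 < ε)
    (P : Matrix (Fin N) (Fin N) ℝ) (hP : P.PosDef)
    (hric : Gtᵀ * P + P * Gt + γ ^ 2 • (P * P)
        + (1 + ε) • (1 : Matrix (Fin N) (Fin N) ℝ) = 0)
    (μ : ℝ) (hμ : 0 < μ)
    (hPμ : ∀ x : EuclideanSpace ℝ (Fin N),
      (inner ℝ x (Matrix.toEuclideanLin P x) : ℝ) ≤ μ * ‖x‖ ^ 2)
    (e d : ℝ → EuclideanSpace ℝ (Fin N))
    (hde : ∀ t : ℝ, 0 ≤ t →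
      HasDerivAt e (Matrix.toEuclideanLin Gt (e t) + d t) t)
    (hd : ∀ t : ℝ, 0 ≤ t → ‖d t‖ ≤ γ * ‖e t‖) :
    ∀ t : ℝ, 0 ≤ t →
      (inner ℝ (e t) (Matrix.toEuclideanLin P (e t)) : ℝ)
        ≤ (inner ℝ (e 0) (Matrix.toEuclideanLin P (e 0)) : ℝ)
            * Real.exp (-(ε / μ) * t) :=
  stmt10_general N Gt γ ε hε P hP hric μ hμ hPμ e d hde hd
end

section
/- Let $N, M, p \ge 1$. Let $G_{11} \in \mathbb{R}^{N \times N}$, $G_{12} \in \mathbb{R}^{N \times M}$, $G_{21} \in \mathbb{R}^{M \times N}$, $K_s \in \mathbb{R}^{N \times p}$, $K_u \in \mathbb{R}^{M \times p}$, and let $G_{22} \in \mathbb{R}^{M \times M}$ be invertible; set $\tilde{G} = G_{11} - G_{12} G_{22}^{-1} G_{21}$. Let $\gamma \ge 0$, $\varepsilon > 0$, and let $P \in \mathbb{R}^{N \times N}$ be symmetric positive definite satisfying $\tilde{G}^\top P + P \tilde{G} + \gamma^2 P P + (1 + \varepsilon)\mathbf{I}_N = 0$. Suppose $e_s : [0,\infty)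 \to \mathbb{R}^N$ is differentiable and $e_u : [0,\infty) \to \mathbb{R}^M$, $\varphi_s : [0,\infty) \to \mathbb{R}^N$, $\varphi_u : [0,\infty) \to \mathbb{R}^M$, $\eta : [0,\infty) \to \mathbb{R}^p$ satisfy, for all $t \ge 0$: $\dot{e}_s(t) = G_{11} e_s(t) + G_{12} e_u(t) + \varphi_s(t) - K_s \eta(t)$, $0 = G_{21} e_s(t) + G_{22} e_u(t) + \varphi_u(t) - K_u \eta(t)$, $\big\|\varphi_s(t) - G_{12} G_{22}^{-1} \varphi_u(t) + (G_{12} G_{22}^{-1} K_u - K_s)\eta(t)\big\| \le \gamma \|e_s(t)\|$, and there exist constants $c_1, c_2 \ge 0$ with $\|\varphi_u(t)\| \le c_1 \|e_s(t)\|$ and $\|\eta(t)\| \le c_2 \|e_s(t)\|$. Then both $e_s(t) \to 0$ and $e_u(t) \to 0$ as $t \to \infty$. -/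
/-!
Solving the algebraic equation for `e_u` (possible since `G₂₂` is invertible) reduces the
differential equation to `ė_s = G̃ e_s + Φ`, where `Φ` is the vector bounded in the Lipschitz
hypothesis, so `‖Φ‖ ≤ γ ‖e_s‖`. Along this reduced system the Lyapunov function
`V = ⟪P e_s, e_s⟫` satisfies, by the Riccati equation,
`V̇ = -γ² ‖P e_s‖² - (1 + ε) ‖e_s‖² + 2 ⟪P e_s, Φ⟫ ≤ -ε ‖e_s‖²`, using `2ab ≤ a² + b²`.
As `V` is comparable to `‖e_s‖²`, it decays exponentially, so `e_s → 0`. Finally `e_u` is a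
linear function of `e_s`, `φ_u` and `η`, and the latter two are `O(‖e_s‖)`.
-/

open Matrix Filter Topology Set
open scoped RealInnerProductSpace

section Lyapunov

variable {E : Type*} [NormedAddCommGroup E] [InnerProductSpace ℝ E]

theorem exists_pos_mul_norm_sq_le_inner [FiniteDimensional ℝ E] {P : E →L[ℝ] E}
    (hP : ∀ v ≠ 0, 0 < ⟪P v, v⟫) : ∃ m > 0, ∀ v, m * ‖v‖ ^ 2 ≤ ⟪P v, v⟫ := by
  obtain ⟨m, hm, hmin⟩ := (isCompact_sphere (0 : E) 1).exists_forall_le'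
    (P.continuous.inner continuous_id).continuousOn
    fun v hv => hP v (ne_zero_of_mem_unit_sphere ⟨v, hv⟩)
  refine ⟨m, hm, fun v => ?_⟩
  rcases eq_or_ne v 0 with rfl | hv
  · simp
  have hnorm : 0 < ‖v‖ := norm_pos_iff.2 hv
  have hunit := hmin (‖v‖⁻¹ • v) (by simp [norm_smul, hnorm.ne'])
  simp only [id_eq, map_smul, inner_smul_left, inner_smul_right, conj_trivial] at hunit
  calc m * ‖v‖ ^ 2 ≤ ‖v‖⁻¹ * (‖v‖⁻¹ * ⟪P v, v⟫) * ‖v‖ ^ 2 := by gcongr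
    _ = ⟪P v, v⟫ := by field_simp

theorem ContinuousLinearMap.inner_map_self_le_norm_mul_sq (P : E →L[ℝ] E) (v : E) :
    ⟪P v, v⟫ ≤ ‖P‖ * ‖v‖ ^ 2 :=
  calc ⟪P v, v⟫ ≤ ‖P v‖ * ‖v‖ := real_inner_le_norm _ _
    _ ≤ ‖P‖ * ‖v‖ * ‖v‖ := by gcongr; exact P.le_opNorm v
    _ = ‖P‖ * ‖v‖ ^ 2 := by ring

theorem le_mul_exp_neg_of_hasDerivAt {V V' : ℝ → ℝ} {c : ℝ}
    (hV : ∀ t, 0 ≤ t → HasDerivAt V (V' t) t) (hV' : ∀ t, 0 ≤ t → V' t ≤ -(c * V t))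
    {t : ℝ} (ht : 0 ≤ t) : V t ≤ V 0 * Real.exp (-(c * t)) := by
  have hW : ∀ s, 0 ≤ s → HasDerivAt (fun s => V s * Real.exp (c * s))
      ((V' s + c * V s) * Real.exp (c * s)) s := fun s hs =>
    ((hV s hs).mul ((hasDerivAt_id' s).const_mul c).exp).congr_deriv (by ring)
  have hanti : AntitoneOn (fun s => V s * Real.exp (c * s)) (Ici 0) := by
    refine antitoneOn_of_hasDerivWithinAt_nonpos (convex_Ici 0)
      (fun s hs => (hW s hs).continuousAt.continuousWithinAt)
      (fun s hs => (hW s (interior_subset hs)).hasDerivWithinAt) fun s hs => ?_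
    have := hV' s (interior_subset hs)
    exact mul_nonpos_of_nonpos_of_nonneg (by linarith) (Real.exp_pos _).le
  have := hanti self_mem_Ici ht ht
  rw [Real.exp_neg, ← div_eq_mul_inv, le_div_iff₀ (Real.exp_pos _)]
  simpa using this

theorem tendsto_nhds_zero_of_quadratic_lyapunov [FiniteDimensional ℝ E] {P : E →L[ℝ] E}
    (hP : ∀ v ≠ 0, 0 < ⟪P v, v⟫) {ε : ℝ} (hε : 0 < ε) {x x' : ℝ → E}
    (hx : ∀ t, 0 ≤ t → HasDerivAt x (x' t) t)
    (hdecay : ∀ t, 0 ≤ t → ⟪P (x t), x' t⟫ + ⟪P (x' t), x t⟫ ≤ -(ε * ‖x t‖ ^ 2)) :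
    Tendsto x atTop (𝓝 0) := by
  obtain ⟨m, hm, hlower⟩ := exists_pos_mul_norm_sq_le_inner hP
  set V : ℝ → ℝ := fun t => ⟪P (x t), x t⟫
  set c := ε / (‖P‖ + 1)
  have hV : ∀ t, 0 ≤ t → HasDerivAt V (⟪P (x t), x' t⟫ + ⟪P (x' t), x t⟫) t := fun t ht =>
    (P.hasFDerivAt.comp_hasDerivAt t (hx t ht)).inner ℝ (hx t ht)
  have hV' : ∀ t, 0 ≤ t → ⟪P (x t), x' t⟫ + ⟪P (x' t), x t⟫ ≤ -(c * V t) := fun t ht => by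
    have hupper : V t ≤ (‖P‖ + 1) * ‖x t‖ ^ 2 := by
      have := P.inner_map_self_le_norm_mul_sq (x t)
      nlinarith [sq_nonneg ‖x t‖]
    have : c * V t ≤ ε * ‖x t‖ ^ 2 := by
      calc c * V t ≤ c * ((‖P‖ + 1) * ‖x t‖ ^ 2) := by gcongr
        _ = ε * ‖x t‖ ^ 2 := by rw [← mul_assoc, div_mul_cancel₀ _ (by positivity)]
    linarith [hdecay t ht]
  have hsq : Tendsto (fun t => ‖x t‖ ^ 2) atTop (𝓝 0) := by
    have hexp : Tendsto (fun t => V 0 / m * Real.exp (-(c * t))) atTop (𝓝 0) := by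
      simpa using (Real.tendsto_exp_neg_atTop_nhds_zero.comp
        (tendsto_id.const_mul_atTop (by positivity : 0 < c))).const_mul (V 0 / m)
    refine squeeze_zero' (.of_forall fun t => by positivity)
      ((eventually_ge_atTop 0).mono fun t ht => ?_) hexp
    rw [div_mul_eq_mul_div, le_div_iff₀ hm]
    linarith [hlower (x t), le_mul_exp_neg_of_hasDerivAt hV hV' ht]
  simpa [tendsto_zero_iff_norm_tendsto_zero, Real.sqrt_sq (norm_nonneg _)] using hsq.sqrt

theorem inner_add_inner_le_of_riccati [CompleteSpace E] {A P : E →L[ℝ] E}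
    (hP : IsSelfAdjoint P) {γ ε : ℝ}
    (hric : ContinuousLinearMap.adjoint A * P + P * A + γ ^ 2 • (P * P) + (1 + ε) • 1 = 0)
    {v φ : E} (hφ : ‖φ‖ ≤ γ * ‖v‖) :
    ⟪P v, A v + φ⟫ + ⟪P (A v + φ), v⟫ ≤ -(ε * ‖v‖ ^ 2) := by
  have hsymm : ∀ u w, ⟪P u, w⟫ = ⟪u, P w⟫ := hP.isSymmetric
  have hquad : 2 * ⟪P v, A v⟫ + γ ^ 2 * ‖P v‖ ^ 2 + (1 + ε) * ‖v‖ ^ 2 = 0 := by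
    have := congrArg (fun T : E →L[ℝ] E => ⟪T v, v⟫) hric
    simp only [_root_.add_apply, mul_apply_eq_comp, _root_.smul_apply, one_apply_eq_self,
      _root_.zero_apply, inner_add_left, inner_smul_left, inner_zero_left, conj_trivial,
      ContinuousLinearMap.adjoint_inner_left, hsymm (A v), hsymm (P v),
      real_inner_self_eq_norm_sq] at this
    linarith [real_inner_comm (P v) (A v)]
  have hφ' : ⟪P v, φ⟫ ≤ ‖P v‖ * (γ * ‖v‖) :=
    (real_inner_le_norm _ _).trans (by gcongr)
  rw [hsymm (A v + φ), real_inner_comm (P v), ← two_mul, inner_add_right]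
  nlinarith [sq_nonneg (γ * ‖P v‖ - ‖v‖)]

end Lyapunov

theorem LinearMap.tendsto_apply_nhds_zero {𝕜 α E F : Type*} [NontriviallyNormedField 𝕜]
    [CompleteSpace 𝕜] [NormedAddCommGroup E] [NormedSpace 𝕜 E] [FiniteDimensional 𝕜 E]
    [NormedAddCommGroup F] [NormedSpace 𝕜 F] (L : E →ₗ[𝕜] F) {l : Filter α} {f : α → E}
    (hf : Tendsto f l (𝓝 0)) : Tendsto (fun a => L (f a)) l (𝓝 0) :=
  (L.continuous_of_finiteDimensional.tendsto' 0 0 (map_zero L)).comp hf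

section Matrix

variable {𝕜 l m n : Type*} [RCLike 𝕜] [Fintype m] [DecidableEq m] [Fintype n] [DecidableEq n]

theorem Matrix.PosDef.inner_toEuclideanCLM_pos {P : Matrix n n ℝ} (hP : P.PosDef)
    {v : EuclideanSpace ℝ n} (hv : v ≠ 0) : 0 < ⟪toEuclideanCLM (𝕜 := ℝ) P v, v⟫ := by
  rw [real_inner_comm, inner_toEuclideanCLM]
  simpa using hP.dotProduct_mulVec_pos (x := v.ofLp) (by simpa using hv)

theorem Matrix.isSelfAdjoint_toEuclideanCLM {P : Matrix n n 𝕜} (hP : P.IsHermitian) :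
    IsSelfAdjoint (toEuclideanCLM (𝕜 := 𝕜) P) :=
  hP.isSelfAdjoint.map _

theorem Matrix.eq_neg_toEuclideanLin_inv_of_add_eq_zero {C : Matrix m n 𝕜} {D : Matrix m m 𝕜}
    (hD : IsUnit D.det) {x : EuclideanSpace 𝕜 n} {y w : EuclideanSpace 𝕜 m}
    (h : toEuclideanLin C x + toEuclideanLin D y + w = 0) :
    y = -toEuclideanLin D⁻¹ (toEuclideanLin C x + w) := by
  have hy : toEuclideanLin D y = -(toEuclideanLin C x + w) := by
    rw [← sub_eq_zero, sub_neg_eq_add, ← h]; abel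
  rw [← map_neg, ← hy, ← LinearMap.comp_apply, ← toLpLin_mul_same, nonsing_inv_mul D hD,
    toLpLin_one, LinearMap.id_apply]

theorem Matrix.toEuclideanLin_add_eq_schur_complement (A : Matrix l n 𝕜) (B : Matrix l m 𝕜)
    {C : Matrix m n 𝕜} {D : Matrix m m 𝕜} (hD : IsUnit D.det) {x : EuclideanSpace 𝕜 n}
    {y w : EuclideanSpace 𝕜 m} (h : toEuclideanLin C x + toEuclideanLin D y + w = 0) :
    toEuclideanLin A x + toEuclideanLin B y
      = toEuclideanLin (A - B * D⁻¹ * C) x - toEuclideanLin (B * D⁻¹) w := by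
  rw [eq_neg_toEuclideanLin_inv_of_add_eq_zero hD h]
  simp only [map_sub, map_add, map_neg, LinearMap.sub_apply, toLpLin_mul_same,
    LinearMap.comp_apply]
  abel

theorem Matrix.tendsto_nhds_zero_of_add_eq_zero {α : Type*} {l : Filter α} {C : Matrix m n 𝕜}
    {D : Matrix m m 𝕜} (hD : IsUnit D.det) {x : α → EuclideanSpace 𝕜 n}
    {y w : α → EuclideanSpace 𝕜 m} (hx : Tendsto x l (𝓝 0)) (hw : Tendsto w l (𝓝 0))
    (h : ∀ᶠ a in l, toEuclideanLin C (x a) + toEuclideanLin D (y a) + w a = 0) :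
    Tendsto y l (𝓝 0) := by
  have hsum := ((toEuclideanLin C).tendsto_apply_nhds_zero hx).add hw
  rw [add_zero] at hsum
  have hlim := ((toEuclideanLin D⁻¹).tendsto_apply_nhds_zero hsum).neg
  rw [neg_zero] at hlim
  exact hlim.congr' (h.mono fun a ha => (eq_neg_toEuclideanLin_inv_of_add_eq_zero hD ha).symm)

theorem Matrix.riccati_toEuclideanCLM {G P : Matrix n n ℝ} {γ ε : ℝ}
    (h : Gᵀ * P + P * G + γ ^ 2 • (P * P) + (1 + ε) • (1 : Matrix n n ℝ) = 0) :
    ContinuousLinearMap.adjoint (toEuclideanCLM (𝕜 := ℝ) G) * toEuclideanCLM (𝕜 := ℝ) P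
      + toEuclideanCLM (𝕜 := ℝ) P * toEuclideanCLM (𝕜 := ℝ) G
      + γ ^ 2 • (toEuclideanCLM (𝕜 := ℝ) P * toEuclideanCLM (𝕜 := ℝ) P) + (1 + ε) • 1 = 0 := by
  have := congrArg (toEuclideanCLM (𝕜 := ℝ) (n := n)) h
  rw [← conjTranspose_eq_transpose_of_trivial, ← star_eq_conjTranspose] at this
  simpa only [map_add, map_mul, map_smul, map_one, map_zero, map_star,
    ContinuousLinearMap.star_eq_adjoint] using this

end Matrix

theorem stmt11_general (N M p : ℕ)
    (G11 : Matrix (Fin N) (Fin N) ℝ) (G12 : Matrix (Fin N) (Fin M) ℝ)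
    (G21 : Matrix (Fin M) (Fin N) ℝ) (G22 : Matrix (Fin M) (Fin M) ℝ)
    (hG22 : IsUnit G22.det)
    (Ks : Matrix (Fin N) (Fin p) ℝ) (Ku : Matrix (Fin M) (Fin p) ℝ)
    (Gt : Matrix (Fin N) (Fin N) ℝ) (hGt : Gt = G11 - G12 * G22⁻¹ * G21)
    (γ : ℝ) (ε : ℝ) (hε : 0 < ε)
    (P : Matrix (Fin N) (Fin N) ℝ) (hP : P.PosDef)
    (hric : Gtᵀ * P + P * Gt + γ ^ 2 • (P * P)
        + (1 + ε) • (1 : Matrix (Fin N) (Fin N) ℝ) = 0)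
    (es : ℝ → EuclideanSpace ℝ (Fin N)) (eu : ℝ → EuclideanSpace ℝ (Fin M))
    (phis : ℝ → EuclideanSpace ℝ (Fin N)) (phiu : ℝ → EuclideanSpace ℝ (Fin M))
    (eta : ℝ → EuclideanSpace ℝ (Fin p))
    (hdiff : ∀ t : ℝ, 0 ≤ t → HasDerivAt es
      (Matrix.toEuclideanLin G11 (es t) + Matrix.toEuclideanLin G12 (eu t)
        + phis t - Matrix.toEuclideanLin Ks (eta t)) t)
    (halg : ∀ t : ℝ, 0 ≤ t →
      (0 : EuclideanSpace ℝ (Fin M))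
        = Matrix.toEuclideanLin G21 (es t) + Matrix.toEuclideanLin G22 (eu t)
          + phiu t - Matrix.toEuclideanLin Ku (eta t))
    (hLip : ∀ t : ℝ, 0 ≤ t →
      ‖phis t - Matrix.toEuclideanLin (G12 * G22⁻¹) (phiu t)
        + Matrix.toEuclideanLin (G12 * G22⁻¹ * Ku - Ks) (eta t)‖ ≤ γ * ‖es t‖)
    (c1 c2 : ℝ)
    (hphiu : ∀ t : ℝ, 0 ≤ t → ‖phiu t‖ ≤ c1 * ‖es t‖)
    (heta : ∀ t : ℝ, 0 ≤ t → ‖eta t‖ ≤ c2 * ‖es t‖) :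
    Filter.Tendsto es Filter.atTop (nhds 0) ∧
      Filter.Tendsto eu Filter.atTop (nhds 0) := by
  have halg' : ∀ t, 0 ≤ t → toEuclideanLin G21 (es t) + toEuclideanLin G22 (eu t)
      + (phiu t - toEuclideanLin Ku (eta t)) = 0 := fun t ht => by
    rw [← add_sub_assoc, ← halg t ht]
  have hreduced : ∀ t, 0 ≤ t → HasDerivAt es (toEuclideanLin Gt (es t)
      + (phis t - toEuclideanLin (G12 * G22⁻¹) (phiu t)
        + toEuclideanLin (G12 * G22⁻¹ * Ku - Ks) (eta t))) t := fun t ht => by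
    convert hdiff t ht using 1
    rw [add_sub_assoc, toEuclideanLin_add_eq_schur_complement G11 G12 hG22 (halg' t ht), ← hGt]
    simp only [map_sub, LinearMap.sub_apply, toLpLin_mul_same, LinearMap.comp_apply]
    abel
  have hes : Tendsto es atTop (𝓝 0) :=
    tendsto_nhds_zero_of_quadratic_lyapunov (fun v hv => hP.inner_toEuclideanCLM_pos hv) hε
      hreduced fun t ht => inner_add_inner_le_of_riccati
        (isSelfAdjoint_toEuclideanCLM hP.isHermitian) (riccati_toEuclideanCLM hric) (hLip t ht)
  have hphiu0 : Tendsto phiu atTop (𝓝 0) :=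
    (Asymptotics.IsBigO.of_bound c1 ((eventually_ge_atTop 0).mono hphiu)).trans_tendsto hes
  have heta0 : Tendsto eta atTop (𝓝 0) :=
    (Asymptotics.IsBigO.of_bound c2 ((eventually_ge_atTop 0).mono heta)).trans_tendsto hes
  refine ⟨hes, tendsto_nhds_zero_of_add_eq_zero hG22 hes
    (by simpa using hphiu0.sub ((toEuclideanLin Ku).tendsto_apply_nhds_zero heta0))
    ((eventually_ge_atTop 0).mono halg')⟩

/-- Observer convergence theorem for the battery pack differential-algebraic
error system: under the Riccati condition on the reduced matrix
`G̃ = G₁₁ - G₁₂G₂₂⁻¹G₂₁` and Lipschitz bounds on the nonlinearities, both the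
differential-state error `e_s` and the algebraic-state error `e_u` converge to
zero asymptotically. -/
theorem stmt11 (N M p : ℕ) (hN : 1 ≤ N) (hM : 1 ≤ M) (hp : 1 ≤ p)
    (G11 : Matrix (Fin N) (Fin N) ℝ) (G12 : Matrix (Fin N) (Fin M) ℝ)
    (G21 : Matrix (Fin M) (Fin N) ℝ) (G22 : Matrix (Fin M) (Fin M) ℝ)
    (hG22 : IsUnit G22.det)
    (Ks : Matrix (Fin N) (Fin p) ℝ) (Ku : Matrix (Fin M) (Fin p) ℝ)
    (Gt : Matrix (Fin N) (Fin N) ℝ) (hGt : Gt = G11 - G12 * G22⁻¹ * G21)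
    (γ : ℝ) (hγ : 0 ≤ γ) (ε : ℝ) (hε : 0 < ε)
    (P : Matrix (Fin N) (Fin N) ℝ) (hP : P.PosDef)
    (hric : Gtᵀ * P + P * Gt + γ ^ 2 • (P * P)
        + (1 + ε) • (1 : Matrix (Fin N) (Fin N) ℝ) = 0)
    (es : ℝ → EuclideanSpace ℝ (Fin N)) (eu : ℝ → EuclideanSpace ℝ (Fin M))
    (phis : ℝ → EuclideanSpace ℝ (Fin N)) (phiu : ℝ → EuclideanSpace ℝ (Fin M))
    (eta : ℝ → EuclideanSpace ℝ (Fin p))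
    (hdiff : ∀ t : ℝ, 0 ≤ t → HasDerivAt es
      (Matrix.toEuclideanLin G11 (es t) + Matrix.toEuclideanLin G12 (eu t)
        + phis t - Matrix.toEuclideanLin Ks (eta t)) t)
    (halg : ∀ t : ℝ, 0 ≤ t →
      (0 : EuclideanSpace ℝ (Fin M))
        = Matrix.toEuclideanLin G21 (es t) + Matrix.toEuclideanLin G22 (eu t)
          + phiu t - Matrix.toEuclideanLin Ku (eta t))
    (hLip : ∀ t : ℝ, 0 ≤ t →
      ‖phis t - Matrix.toEuclideanLin (G12 * G22⁻¹) (phiu t)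
        + Matrix.toEuclideanLin (G12 * G22⁻¹ * Ku - Ks) (eta t)‖ ≤ γ * ‖es t‖)
    (c1 c2 : ℝ) (hc1 : 0 ≤ c1) (hc2 : 0 ≤ c2)
    (hphiu : ∀ t : ℝ, 0 ≤ t → ‖phiu t‖ ≤ c1 * ‖es t‖)
    (heta : ∀ t : ℝ, 0 ≤ t → ‖eta t‖ ≤ c2 * ‖es t‖) :
    Filter.Tendsto es Filter.atTop (nhds 0) ∧
      Filter.Tendsto eu Filter.atTop (nhds 0) :=
  stmt11_general N M p G11 G12 G21 G22 hG22 Ks Ku Gt hGt γ ε hε P hP hric es eu phis phiu eta hdiff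
    halg hLip c1 c2 hphiu heta
end

section
/- Let $n, p \ge 1$, $E, T \in \mathbb{R}^{n \times n}$, $C \in \mathbb{R}^{p \times n}$. Assume (C1) the $(n+p) \times n$ stacked matrix $[E^\top, C^\top]^\top$ has rank $n$, and (C2) for every $\lambda \in \mathbb{C}$ the $(n+p) \times n$ complex stacked matrix $[(\lambda E - T)^\top, C^\top]^\top$ (with $E$, $T$, $C$ regarded as complex matrices) has rank $n$. Then every infinitely differentiable function $x : J \to \mathbb{R}^n$ on a nonempty open interval $J \subseteq \mathbb{R}$ satisfying $E \dot{x}(t) = T x(t)$ and $C x(t) = 0$ for all $t \in J$ is identically zero on $J$. Equivalently, by linearity, any two smooth solutions of $E\dot{x} = Tx + Bu(t)$ with the same input $u$ and the same output $y = Cx$ on $J$ coincide on $J$. -/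
/-- Full column rank implies trivial kernel of `mulVec`. -/
lemma aux_fullrank_inj {K : Type*} [Field K] {m : Type*} [Fintype m] {n : ℕ} (M : Matrix m (Fin n) K)
    (h : M.rank = n) : ∀ v, M.mulVec v = 0 → v = 0 := by
  intro v hv
  have h1 := LinearMap.finrank_range_add_finrank_ker M.mulVecLin
  rw [Matrix.rank] at h
  rw [h, Module.finrank_pi] at h1
  simp only [Fintype.card_fin] at h1
  have hk : Module.finrank K (LinearMap.ker M.mulVecLin) = 0 := by omega
  have := Submodule.finrank_eq_zero.mp hk
  have hv' : v ∈ LinearMap.ker M.mulVecLin := hv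
  rw [this] at hv'
  simpa using hv'

/-- Core eigenvector argument: a subspace killed by `Cc` and mapped by `Tc` into its
`Ec`-image must be trivial, given the two kernel conditions. -/
lemma aux_eig {n p : ℕ} (Ec Tc : Matrix (Fin n) (Fin n) ℂ) (Cc : Matrix (Fin p) (Fin n) ℂ)
    (S : Submodule ℂ (Fin n → ℂ))
    (hSC : ∀ v ∈ S, Cc.mulVec v = 0)
    (hST : ∀ v ∈ S, ∃ w ∈ S, Ec.mulVec w = Tc.mulVec v)
    (hker : ∀ v, Ec.mulVec v = 0 → Cc.mulVec v = 0 → v = 0)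
    (heig : ∀ lam : ℂ, ∀ v, (lam • Ec - Tc).mulVec v = 0 → Cc.mulVec v = 0 → v = 0) :
    S = ⊥ := by
  by_contra hS
  have : Nontrivial S := Submodule.nontrivial_iff_ne_bot.mpr hS
  set e := Ec.mulVecLin with he
  set tt := Tc.mulVecLin with ht
  set eS := e.submoduleMap S with heS
  have hinj : Function.Injective eS := by
    rw [← LinearMap.ker_eq_bot, LinearMap.ker_eq_bot']
    intro v hv
    have h1 : e v.val = 0 := by
      have := congrArg Subtype.val hv
      rwa [LinearMap.submoduleMap_coe_apply] at this
    exact Subtype.ext (hker _ h1 (hSC _ v.2))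
  have hsurj := e.submoduleMap_surjective S
  let eEquiv : S ≃ₗ[ℂ] S.map e := LinearEquiv.ofBijective eS ⟨hinj, hsurj⟩
  have htmem : ∀ v : S, tt v.val ∈ S.map e := by
    intro v
    obtain ⟨w, hw, hew⟩ := hST v.val v.2
    exact ⟨w, hw, hew⟩
  let tmap : S →ₗ[ℂ] S.map e := LinearMap.codRestrict (S.map e) (tt.comp S.subtype) htmem
  let A : Module.End ℂ S := eEquiv.symm.toLinearMap.comp tmap
  obtain ⟨μ, hμ⟩ := Module.End.exists_eigenvalue A
  obtain ⟨v, hv⟩ := hμ.exists_hasEigenvector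
  have hAv : A v = μ • v := hv.apply_eq_smul
  have key : e ((A v : S) : Fin n → ℂ) = tt v.val := by
    have : eEquiv (A v) = tmap v := by
      show eEquiv (eEquiv.symm (tmap v)) = tmap v
      simp
    have h2 := congrArg Subtype.val this
    rwa [show ((eEquiv (A v) : S.map e) : Fin n → ℂ) = e ((A v : S) : Fin n → ℂ) from
      LinearMap.submoduleMap_coe_apply e (A v)] at h2
  rw [hAv] at key
  have key2 : (μ • Ec - Tc).mulVec v.val = 0 := by
    have : μ • (e v.val) = tt v.val := by
      rw [← key]; simp
    simp only [he, ht, Matrix.mulVecLin_apply] at this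
    rw [Matrix.sub_mulVec, Matrix.smul_mulVec, this]
    simp
  exact hv.2 (Subtype.ext (heig μ v.val key2 (hSC _ v.2)))

/-- Complexification commutes with `mulVec`. -/
lemma aux_mulVec_ofReal {m n : ℕ} (M : Matrix (Fin m) (Fin n) ℝ) (v : Fin n → ℝ) :
    (M.map Complex.ofReal).mulVec (fun i => (v i : ℂ)) = fun j => ((M.mulVec v) j : ℂ) := by
  funext j
  simp [Matrix.mulVec, dotProduct, Matrix.map_apply]

/-- Sufficiency of the complete observability rank conditions for a linear
descriptor system: if (C1) `rank [Eᵀ, Cᵀ]ᵀ = n` and (C2)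
`rank [(λE - T)ᵀ, Cᵀ]ᵀ = n` for all complex `λ`, then any smooth solution of
`Eẋ = Tx` with zero output `Cx = 0` on a nonempty open interval vanishes
identically. -/
theorem stmt12 (n p : ℕ) (hn : 1 ≤ n) (hp : 1 ≤ p)
    (E T : Matrix (Fin n) (Fin n) ℝ) (C : Matrix (Fin p) (Fin n) ℝ)
    (hC1 : (Matrix.fromRows E C).rank = n)
    (hC2 : ∀ lam : ℂ,
      (Matrix.fromRows
        (lam • E.map Complex.ofReal - T.map Complex.ofReal)
        (C.map Complex.ofReal)).rank = n)
    (a b : ℝ) (hab : a < b) (x : ℝ → Fin n → ℝ)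
    (hsmooth : ContDiffOn ℝ (⊤ : ℕ∞) x (Set.Ioo a b))
    (hdyn : ∀ t ∈ Set.Ioo a b, E.mulVec (deriv x t) = T.mulVec (x t))
    (hout : ∀ t ∈ Set.Ioo a b, C.mulVec (x t) = 0) :
    ∀ t ∈ Set.Ioo a b, x t = 0 := by
  have hopen : IsOpen (Set.Ioo a b) := isOpen_Ioo
  -- iterated derivatives
  let d : ℕ → ℝ → Fin n → ℝ := fun k => deriv^[k] x
  have hd0 : d 0 = x := rfl
  have hdsucc : ∀ k, d (k + 1) = deriv (d k) := by
    intro k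
    show deriv^[k+1] x = deriv (deriv^[k] x)
    rw [Function.iterate_succ_apply' deriv k x]
  have hdsm : ∀ k, ContDiffOn ℝ (⊤ : ℕ∞) (d k) (Set.Ioo a b) := by
    intro k
    induction k with
    | zero => exact hsmooth
    | succ k ih =>
      rw [hdsucc k]
      exact ih.deriv_of_isOpen hopen (by simp)
  have hdd : ∀ k, ∀ t ∈ Set.Ioo a b, HasDerivAt (d k) (d (k + 1) t) t := by
    intro k t ht
    have := ((hdsm k).differentiableOn (by simp)).differentiableAt (hopen.mem_nhds ht)
    rw [hdsucc k]
    exact this.hasDerivAt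
  -- matrices as continuous linear maps for differentiation
  have hmul_deriv : ∀ (m : ℕ) (M : Matrix (Fin m) (Fin n) ℝ) (k : ℕ),
      ∀ t ∈ Set.Ioo a b,
      HasDerivAt (fun s => M.mulVec (d k s)) (M.mulVec (d (k + 1) t)) t := by
    intro m M k t ht
    have hL := (LinearMap.toContinuousLinearMap M.mulVecLin).hasFDerivAt
      (x := d k t)
    have := hL.comp_hasDerivAt t (hdd k t ht)
    exact this
  -- differentiated output and dynamics relations
  have hCk : ∀ k, ∀ t ∈ Set.Ioo a b, C.mulVec (d k t) = 0 := by
    intro k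
    induction k with
    | zero => simpa [hd0] using hout
    | succ k ih =>
      intro t ht
      have heq : (fun s => C.mulVec (d k s)) =ᶠ[nhds t] (fun _ => (0 : Fin p → ℝ)) := by
        filter_upwards [hopen.mem_nhds ht] with s hs using ih s hs
      have h1 : deriv (fun s => C.mulVec (d k s)) t = 0 := by
        rw [heq.deriv_eq]
        simp
      rw [(hmul_deriv p C k t ht).deriv] at h1
      exact h1
  have hEk : ∀ k, ∀ t ∈ Set.Ioo a b,
      E.mulVec (d (k + 1) t) = T.mulVec (d k t) := by
    intro k
    induction k with
    | zero =>
      intro t ht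
      have := hdyn t ht
      rw [hd0, hdsucc 0, hd0]
      exact this
    | succ k ih =>
      intro t ht
      have heq : (fun s => E.mulVec (d (k + 1) s)) =ᶠ[nhds t]
          (fun s => T.mulVec (d k s)) := by
        filter_upwards [hopen.mem_nhds ht] with s hs using ih s hs
      have h1 := heq.deriv_eq
      rw [(hmul_deriv n E (k + 1) t ht).deriv, (hmul_deriv n T k t ht).deriv] at h1
      exact h1
  -- fixed point in time; complexify
  intro t ht
  set Ec := E.map Complex.ofReal with hEc
  set Tc := T.map Complex.ofReal with hTc
  set Cc := C.map Complex.ofReal with hCc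
  let cx : ℕ → Fin n → ℂ := fun k i => ((d k t) i : ℂ)
  let S : Submodule ℂ (Fin n → ℂ) := Submodule.span ℂ (Set.range cx)
  -- kernel conditions from the rank hypotheses
  have hkerR : ∀ v : Fin n → ℝ, E.mulVec v = 0 → C.mulVec v = 0 → v = 0 := by
    intro v hE hC
    refine aux_fullrank_inj _ hC1 v ?_
    rw [Matrix.fromRows_mulVec, hE, hC]
    funext j; cases j <;> simp
  have hker : ∀ v : Fin n → ℂ, Ec.mulVec v = 0 → Cc.mulVec v = 0 → v = 0 := by
    intro v hE hC
    have hre : ∀ (m : ℕ) (M : Matrix (Fin m) (Fin n) ℝ),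
        (M.map Complex.ofReal).mulVec v = 0 →
        M.mulVec (fun i => (v i).re) = 0 ∧ M.mulVec (fun i => (v i).im) = 0 := by
      intro m M hM
      constructor <;> funext j <;>
      · have := congrFun hM j
        simp only [Matrix.mulVec, dotProduct, Matrix.map_apply, Pi.zero_apply] at this ⊢
        first
        | · have := congrArg Complex.re this
            simpa [Complex.mul_re] using this
        | · have := congrArg Complex.im this
            simpa [Complex.mul_im] using this
    obtain ⟨hEre, hEim⟩ := hre n E hE
    obtain ⟨hCre, hCim⟩ := hre p C hC
    have h1 := hkerR _ hEre hCre
    have h2 := hkerR _ hEim hCim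
    funext i
    have e1 := congrFun h1 i
    have e2 := congrFun h2 i
    simp only [Pi.zero_apply] at e1 e2 ⊢
    exact Complex.ext e1 e2
  have heig : ∀ lam : ℂ, ∀ v : Fin n → ℂ,
      (lam • Ec - Tc).mulVec v = 0 → Cc.mulVec v = 0 → v = 0 := by
    intro lam v h1 h2
    refine aux_fullrank_inj _ (hC2 lam) v ?_
    rw [Matrix.fromRows_mulVec, h1, h2]
    funext j; cases j <;> simp
  -- the span satisfies the hypotheses of aux_eig
  have hcxS : ∀ k, cx k ∈ S := fun k => Submodule.subset_span ⟨k, rfl⟩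
  have hSC : ∀ v ∈ S, Cc.mulVec v = 0 := by
    intro v hv
    have hle : S ≤ LinearMap.ker Cc.mulVecLin := by
      rw [Submodule.span_le]
      rintro _ ⟨k, rfl⟩
      show Cc.mulVec (cx k) = 0
      rw [hCc, aux_mulVec_ofReal C (d k t), hCk k t ht]
      funext j; simp
    exact hle hv
  have hST : ∀ v ∈ S, ∃ w ∈ S, Ec.mulVec w = Tc.mulVec v := by
    intro v hv
    have hle : S ≤ Submodule.comap Tc.mulVecLin (S.map Ec.mulVecLin) := by
      rw [Submodule.span_le]
      rintro _ ⟨k, rfl⟩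
      refine ⟨cx (k + 1), hcxS (k + 1), ?_⟩
      show Ec.mulVec (cx (k + 1)) = Tc.mulVec (cx k)
      rw [hEc, hTc, aux_mulVec_ofReal E (d (k+1) t), aux_mulVec_ofReal T (d k t),
        hEk k t ht]
    obtain ⟨w, hw, hew⟩ := hle hv
    exact ⟨w, hw, hew⟩
  have hSbot : S = ⊥ := aux_eig Ec Tc Cc S hSC hST hker heig
  have : cx 0 = 0 := by
    have := hcxS 0
    rw [hSbot] at this
    simpa using this
  funext i
  have h0 : (x t i : ℂ) = 0 := congrFun this i
  exact_mod_cast h0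
end

section
/- Let $N, m \ge 1$, $A \in \mathbb{R}^{N \times N}$, $C \in \mathbb{R}^{m \times N}$, and suppose the $(N+m) \times N$ stacked matrix $[A^\top, C^\top]^\top$ has rank $N$ (equivalently, $\ker A \cap \ker C = \{0\}$). Then there exists a matrix $K \in \mathbb{R}^{N \times m}$ such that $A - K C$ is invertible. -/
/-- Impulse observability allows output injection to make the algebraic block
nonsingular: if `[Aᵀ, Cᵀ]ᵀ` has full column rank `N`, then there is a gain `K`
such that `A - KC` is invertible. -/
theorem stmt13 (N m : ℕ) (hN : 1 ≤ N) (hm : 1 ≤ m)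
    (A : Matrix (Fin N) (Fin N) ℝ) (C : Matrix (Fin m) (Fin N) ℝ)
    (hrank : (Matrix.fromRows A C).rank = N) :
    ∃ K : Matrix (Fin N) (Fin m) ℝ, IsUnit (A - K * C).det := by
  classical
  set f := A.mulVecLin with hf
  set g := C.mulVecLin with hg
  -- kernel intersection is trivial
  have hker : ∀ x : Fin N → ℝ, f x = 0 → g x = 0 → x = 0 := by
    intro x hfx hgx
    have hinj : Function.Injective (Matrix.fromRows A C).mulVecLin := by
      rw [← LinearMap.ker_eq_bot]
      have h1 := LinearMap.finrank_range_add_finrank_ker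
        (Matrix.fromRows A C).mulVecLin
      have h2 : Module.finrank ℝ
          (LinearMap.range (Matrix.fromRows A C).mulVecLin) = N := hrank
      have h3 : Module.finrank ℝ (Fin N → ℝ) = N := by simp
      have h4 : Module.finrank ℝ
          (LinearMap.ker (Matrix.fromRows A C).mulVecLin) = 0 := by omega
      exact Submodule.finrank_eq_zero.mp h4
    have hx : (Matrix.fromRows A C).mulVecLin x = (Matrix.fromRows A C).mulVecLin 0 := by
      simp only [Matrix.mulVecLin_apply, Matrix.fromRows_mulVec, Matrix.mulVec_zero]
      simp only [hf, hg, Matrix.mulVecLin_apply] at hfx hgx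
      rw [hfx, hgx]
      ext i
      cases i <;> rfl
    exact hinj hx
  -- set up subspaces
  set R := LinearMap.range f with hR
  set Kf := LinearMap.ker f with hKf
  obtain ⟨W, hW⟩ := Submodule.exists_isCompl R
  set U := Kf.map g with hU
  have hdimU : Module.finrank ℝ U = Module.finrank ℝ Kf := by
    have hinj : Function.Injective (g ∘ₗ Kf.subtype) := by
      rw [← LinearMap.ker_eq_bot, LinearMap.ker_eq_bot']
      intro a ha
      simp only [LinearMap.comp_apply, Submodule.coe_subtype] at ha
      have := hker a.1 (LinearMap.mem_ker.mp a.2) ha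
      exact Subtype.ext this
    have : U = LinearMap.range (g ∘ₗ Kf.subtype) := by
      rw [LinearMap.range_comp, Submodule.range_subtype]
    rw [this]
    exact LinearMap.finrank_range_of_inj hinj
  have hdimW : Module.finrank ℝ W = Module.finrank ℝ Kf := by
    have h1 := Submodule.finrank_add_eq_of_isCompl hW
    have h2 := LinearMap.finrank_range_add_finrank_ker f
    have h3 : Module.finrank ℝ (Fin N → ℝ) = N := by simp
    have e1 : Module.finrank ℝ R = Module.finrank ℝ (LinearMap.range f) := rfl
    have e2 : Module.finrank ℝ Kf = Module.finrank ℝ (LinearMap.ker f) := rfl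
    rw [h3] at h1 h2
    omega
  obtain ⟨φ⟩ := FiniteDimensional.nonempty_linearEquiv_of_finrank_eq
    (hdimU.trans hdimW.symm)
  obtain ⟨U', hU'⟩ := Submodule.exists_isCompl U
  set P := U.linearProjOfIsCompl U' hU' with hP
  set k : (Fin m → ℝ) →ₗ[ℝ] (Fin N → ℝ) := W.subtype ∘ₗ (φ : U →ₗ[ℝ] W) ∘ₗ P with hk
  refine ⟨LinearMap.toMatrix' k, ?_⟩
  rw [← Matrix.isUnit_iff_isUnit_det, ← Matrix.mulVec_injective_iff_isUnit]
  have hml : ∀ v, (A - LinearMap.toMatrix' k * C).mulVec v = f v - k (g v) := by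
    intro v
    rw [Matrix.sub_mulVec, ← Matrix.mulVec_mulVec]
    have hkv : (LinearMap.toMatrix' k).mulVec (C.mulVec v) = k (C.mulVec v) := by
      rw [← Matrix.toLin'_apply, Matrix.toLin'_toMatrix']
    rw [hkv]
    rfl
  -- injectivity of x ↦ (A - KC) x
  have hinj : ∀ z : Fin N → ℝ, f z - k (g z) = 0 → z = 0 := by
    intro z hz
    have hfz : f z = k (g z) := by
      rwa [sub_eq_zero] at hz
    -- k (g z) ∈ W and f z ∈ R, with R ⊓ W = ⊥
    have hmemW : k (g z) ∈ W := by
      simp only [hk, LinearMap.comp_apply, Submodule.coe_subtype]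
      exact ((φ : U →ₗ[ℝ] W) (P (g z))).2
    have hmemR : f z ∈ R := LinearMap.mem_range_self f z
    have hfz0 : f z = 0 := by
      have : f z ∈ R ⊓ W := ⟨hmemR, hfz ▸ hmemW⟩
      rwa [hW.inf_eq_bot, Submodule.mem_bot] at this
    have hkgz : k (g z) = 0 := hfz ▸ hfz0
    have hzKf : z ∈ Kf := LinearMap.mem_ker.mpr hfz0
    have hgzU : g z ∈ U := Submodule.mem_map_of_mem hzKf
    have hPgz : P (g z) = ⟨g z, hgzU⟩ :=
      Submodule.linearProjOfIsCompl_apply_left hU' ⟨g z, hgzU⟩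
    have hφ0 : (φ : U →ₗ[ℝ] W) (P (g z)) = 0 := by
      have : (W.subtype) ((φ : U →ₗ[ℝ] W) (P (g z))) = 0 := hkgz
      exact Subtype.ext this
    have hgz0 : g z = 0 := by
      have h1 : P (g z) = 0 := by
        have := φ.injective (a₁ := P (g z)) (a₂ := 0) (by simpa using hφ0)
        exact this
      rw [hPgz] at h1
      exact congrArg Subtype.val h1
    exact hker z hfz0 hgz0
  intro x y hxy
  have h0 : (A - LinearMap.toMatrix' k * C).mulVec (x - y) = 0 := by
    rw [Matrix.mulVec_sub, hxy, sub_self]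
  rw [hml] at h0
  exact sub_eq_zero.mp (hinj (x - y) h0)
end
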